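/- arXiv:1903.00558 — 7 statements merged into one kernel-verified Lean document; each statement's English description precedes it below -/
import Mathlib

section
/- Let θ_a > θ_b > θ_c > 0 be real numbers, and for positive reals x, y write p̃_{xy} := x/(x+y) − 1/2. If ε₁ > 0 and ε₂ > 0 satisfy ε₁ + ε₂ < 1/2, and p̃_{ba} > −ε₁ and p̃_{cb} > −ε₂, then p̃_{ca} > −(ε₁ + ε₂). -/
/-!
In odds form, `p̃_{xy} > -ε` says `x / y > f ε` with `f ε = (1 - 2ε) / (1 + 2ε)`.
Odds multiply along the chain `c, b, a`, and `f ε₁ * f ε₂ ≥ f (ε₁ + ε₂)` for `ε₁, ε₂ ≥ 0`: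
cleared of denominators, the gap is `2ε₁ε₂(ε₁ + ε₂) ≥ 0`.
-/

noncomputable def shiftedPref (x y : ℝ) : ℝ := x / (x + y) - 1 / 2

lemma neg_lt_shiftedPref_iff {x y : ℝ} (hx : 0 < x) (hy : 0 < y) (ε : ℝ) :
    -ε < shiftedPref x y ↔ (1 / 2 - ε) * y < (1 / 2 + ε) * x := by
  rw [shiftedPref, lt_sub_iff_add_lt, lt_div_iff₀ (by linarith)]
  constructor <;> intro h <;> linarith

lemma odds_bound_trans {x y z a b : ℝ} (hx : 0 < x) (ha : 0 ≤ a) (hb : 0 ≤ b)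
    (hab : a + b < 1 / 2)
    (hxy : (1 / 2 - a) * x < (1 / 2 + a) * y) (hyz : (1 / 2 - b) * y < (1 / 2 + b) * z) :
    (1 / 2 - (a + b)) * x < (1 / 2 + (a + b)) * z := by
  have hchain : (1 / 2 - a) * (1 / 2 - b) * x < (1 / 2 + a) * (1 / 2 + b) * z := by
    nlinarith [mul_lt_mul_of_pos_left hxy (by linarith : (0 : ℝ) < 1 / 2 - b),
      mul_lt_mul_of_pos_left hyz (by linarith : (0 : ℝ) < 1 / 2 + a)]
  have hgap : (1 / 2 + (a + b)) * ((1 / 2 - a) * (1 / 2 - b))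
      - (1 / 2 - (a + b)) * ((1 / 2 + a) * (1 / 2 + b)) = 2 * a * b * (a + b) := by ring
  have hQ : 0 < (1 / 2 + a) * (1 / 2 + b) := by positivity
  refine lt_of_mul_lt_mul_right ?_ hQ.le
  nlinarith [mul_nonneg (mul_nonneg (mul_nonneg ha hb) (add_nonneg ha hb)) hx.le,
    mul_lt_mul_of_pos_left hchain (by linarith : (0 : ℝ) < 1 / 2 + (a + b))]

/-- Plackett–Luce margin composition: if `p̃_{ba} > -ε₁` and `p̃_{cb} > -ε₂` with
`ε₁ + ε₂ < 1/2`, then `p̃_{ca} > -(ε₁ + ε₂)`, where `p̃_{xy} = x/(x+y) - 1/2`. -/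
theorem stmt0 (θa θb θc ε1 ε2 : ℝ)
    (hc : 0 < θc) (hcb : θc < θb) (hba : θb < θa)
    (hε1 : 0 < ε1) (hε2 : 0 < ε2) (hsum : ε1 + ε2 < 1/2)
    (h1 : θb / (θb + θa) - 1/2 > -ε1)
    (h2 : θc / (θc + θb) - 1/2 > -ε2) :
    θc / (θc + θa) - 1/2 > -(ε1 + ε2) := by
  have hb : 0 < θb := hc.trans hcb
  have ha : 0 < θa := hb.trans hba
  have hab := (neg_lt_shiftedPref_iff hb ha ε1).mp h1
  have hbc := (neg_lt_shiftedPref_iff hc hb ε2).mp h2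
  exact (neg_lt_shiftedPref_iff hc ha _).mpr
    (odds_bound_trans ha hε1.le hε2.le hsum hab hbc)
end

section
/- Let L ≥ 1 be an integer, let θ_0, θ_1, …, θ_L > 0 be real numbers, and let ε_1, …, ε_L > 0 satisfy Σ_{ℓ=1}^L ε_ℓ < 1/2. If for every ℓ ∈ {1, …, L} one has θ_ℓ/(θ_ℓ + θ_{ℓ−1}) − 1/2 > −ε_ℓ, then θ_L/(θ_L + θ_0) − 1/2 > −Σ_{ℓ=1}^L ε_ℓ. -/
/-!
Write `odds e = (1 + 2e)/(1 - 2e)`. For positive `x, y` and `e < 1/2`, the margin bound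
`x/(x+y) - 1/2 > -e` says exactly `y/x < odds e`. The ratio `θ₀/θ_L` telescopes into the product
of the consecutive ratios `θ_{ℓ-1}/θ_ℓ`, each below `odds ε_ℓ`, and `odds` is supermultiplicative
on nonnegative arguments: `odds a * odds b ≤ odds (a + b)`, since after clearing denominators
the two sides differ by `16ab(a+b)`.
-/

open Finset

noncomputable section

def odds (e : ℝ) : ℝ := (1 + 2 * e) / (1 - 2 * e)

lemma odds_pos {e : ℝ} (h₀ : 0 ≤ e) (h₁ : e < 1 / 2) : 0 < odds e :=
  div_pos (by linarith) (by linarith)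

lemma sub_half_gt_neg_iff_div_lt_odds {x y e : ℝ} (hx : 0 < x) (hy : 0 < y) (he : e < 1 / 2) :
    x / (x + y) - 1 / 2 > -e ↔ y / x < odds e := by
  rw [odds, gt_iff_lt, neg_lt_sub_iff_lt_add, div_lt_div_iff₀ hx (by linarith),
    ← sub_lt_iff_lt_add', lt_div_iff₀ (by linarith)]
  constructor <;> intro h <;> linarith

lemma odds_mul_odds_le {a b : ℝ} (ha : 0 ≤ a) (hb : 0 ≤ b) (hab : a + b < 1 / 2) :
    odds a * odds b ≤ odds (a + b) := by
  rw [odds, odds, odds, div_mul_div_comm, div_le_div_iff₀ (by nlinarith) (by linarith)]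
  nlinarith [mul_nonneg (mul_nonneg ha hb) (add_nonneg ha hb)]

lemma prod_odds_le_odds_sum {ι : Type*} (s : Finset ι) {e : ι → ℝ} (he : ∀ i ∈ s, 0 ≤ e i)
    (hs : ∑ i ∈ s, e i < 1 / 2) : ∏ i ∈ s, odds (e i) ≤ odds (∑ i ∈ s, e i) := by
  classical
  induction s using Finset.induction_on with
  | empty => simp [odds]
  | insert a s ha ih =>
    rw [sum_insert ha] at hs ⊢
    rw [prod_insert ha]
    have hea : 0 ≤ e a := he a (mem_insert_self a s)
    have hes : ∀ i ∈ s, 0 ≤ e i := fun i hi ↦ he i (mem_insert_of_mem hi)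
    have hsum : 0 ≤ ∑ i ∈ s, e i := sum_nonneg hes
    calc odds (e a) * ∏ i ∈ s, odds (e i)
        ≤ odds (e a) * odds (∑ i ∈ s, e i) :=
          mul_le_mul_of_nonneg_left (ih hes (by linarith)) (odds_pos hea (by linarith)).le
      _ ≤ odds (e a + ∑ i ∈ s, e i) := odds_mul_odds_le hea hsum hs

lemma prod_Icc_div_eq {K : Type*} [Field K] {f : ℕ → K} {n : ℕ} (hf : ∀ i ≤ n, f i ≠ 0) :
    ∏ i ∈ Icc 1 n, f (i - 1) / f i = f 0 / f n := by
  induction n with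
  | zero => simp [div_self (hf 0 le_rfl)]
  | succ n ih =>
    rw [prod_Icc_succ_top (by omega), ih fun i hi ↦ hf i (by omega), Nat.add_sub_cancel,
      div_mul_div_cancel₀ (hf n (by omega))]

end

/-- Chained Plackett–Luce margin composition: if each consecutive shifted preference
`θ_ℓ/(θ_ℓ + θ_{ℓ-1}) - 1/2 > -ε_ℓ` and `∑ ε_ℓ < 1/2`, then
`θ_L/(θ_L + θ_0) - 1/2 > -∑ ε_ℓ`. -/
theorem stmt1 (L : ℕ) (hL : 1 ≤ L) (θ ε : ℕ → ℝ)
    (hθ : ∀ ℓ ≤ L, 0 < θ ℓ)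
    (hε : ∀ ℓ ∈ Finset.Icc 1 L, 0 < ε ℓ)
    (hsum : ∑ ℓ ∈ Finset.Icc 1 L, ε ℓ < 1/2)
    (hstep : ∀ ℓ ∈ Finset.Icc 1 L, θ ℓ / (θ ℓ + θ (ℓ - 1)) - 1/2 > -ε ℓ) :
    θ L / (θ L + θ 0) - 1/2 > -∑ ℓ ∈ Finset.Icc 1 L, ε ℓ := by
  have hε_le : ∀ ℓ ∈ Icc 1 L, ε ℓ < 1 / 2 := fun ℓ hℓ ↦
    (single_le_sum (fun i hi ↦ (hε i hi).le) hℓ).trans_lt hsum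
  have hratio : ∀ ℓ ∈ Icc 1 L, θ (ℓ - 1) / θ ℓ < odds (ε ℓ) := fun ℓ hℓ ↦ by
    have hℓL := (mem_Icc.mp hℓ).2
    exact (sub_half_gt_neg_iff_div_lt_odds (hθ ℓ hℓL) (hθ (ℓ - 1) (by omega))
      (hε_le ℓ hℓ)).mp (hstep ℓ hℓ)
  rw [sub_half_gt_neg_iff_div_lt_odds (hθ L le_rfl) (hθ 0 (Nat.zero_le L)) hsum,
    ← prod_Icc_div_eq fun i hi ↦ (hθ i hi).ne']
  calc ∏ ℓ ∈ Icc 1 L, θ (ℓ - 1) / θ ℓ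
      < ∏ ℓ ∈ Icc 1 L, odds (ε ℓ) :=
        prod_lt_prod_of_nonempty (fun ℓ hℓ ↦ div_pos (hθ _ (by grind)) (hθ _ (by grind)))
          hratio (nonempty_Icc.mpr hL)
    _ ≤ odds (∑ ℓ ∈ Icc 1 L, ε ℓ) :=
        prod_odds_le_odds_sum _ (fun ℓ hℓ ↦ (hε ℓ hℓ).le) hsum
end

section
/- Let S be a finite nonempty set, let θ_i > 0 for each i ∈ S, let θ_S := Σ_{i∈S} θ_i, fix a ∈ S, and let Δ' be a real number with θ_a + Δ' > 0. Define probability mass functions on S by p(i) = θ_i/θ_S for all i ∈ S, and q(i) = θ_i/(θ_S + Δ') for i ≠ a with q(a) = (θ_a + Δ')/(θ_S + Δ'). Then Σ_{i∈S} p(i)²/q(i) − 1 = Δ'² (θ_S − θ_a) / (θ_S² (θ_a + Δ')). -/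
/-! Writing `p = θ / θ_S` and `q = θ' / (θ_S + Δ')` with `θ' = update θ a (θ_a + Δ')`, the
normalisations factor out of `∑ p²/q`, and `θ_i² / θ'_i = θ_i` for `i ≠ a`; hence
`∑ p²/q = (θ_S + Δ') / θ_S² · (θ_S - θ_a + θ_a² / (θ_a + Δ'))`, and the rest is algebra. -/

open Finset

theorem sum_div_sq_div_div {ι K : Type*} [Field K] (S : Finset ι) (x y : ι → K) (c d : K) :
    ∑ i ∈ S, (x i / c) ^ 2 / (y i / d) = d / c ^ 2 * ∑ i ∈ S, x i ^ 2 / y i := by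
  rw [mul_sum]
  refine sum_congr rfl fun i _ => ?_
  rw [div_pow, div_div_eq_mul_div]
  ring

theorem sum_sq_div_update {ι K : Type*} [DecidableEq ι] [Field K] {S : Finset ι} {a : ι}
    (ha : a ∈ S) (θ : ι → K) (v : K) :
    ∑ i ∈ S, θ i ^ 2 / Function.update θ a v i = ∑ i ∈ S, θ i - θ a + θ a ^ 2 / v := by
  rw [← add_sum_erase _ _ ha, Function.update_self, ← sum_erase_eq_sub ha, add_comm]
  congr 1
  refine sum_congr rfl fun i hi => ?_
  rw [Function.update_of_ne (ne_of_mem_erase hi), sq, mul_self_div_self]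

theorem stmt5_general {ι : Type*} [DecidableEq ι] (S : Finset ι)
    (θ : ι → ℝ) (hθ : ∀ i ∈ S, 0 < θ i) (a : ι) (ha : a ∈ S)
    (Δ' : ℝ) (hΔ : 0 < θ a + Δ') :
    (∑ i ∈ S, (θ i / ∑ j ∈ S, θ j) ^ 2 /
        (if i = a then (θ a + Δ') / ((∑ j ∈ S, θ j) + Δ')
         else θ i / ((∑ j ∈ S, θ j) + Δ'))) - 1
      = Δ' ^ 2 * ((∑ j ∈ S, θ j) - θ a) / ((∑ j ∈ S, θ j) ^ 2 * (θ a + Δ')) := by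
  set T := ∑ j ∈ S, θ j
  have hT : T ≠ 0 := (sum_pos hθ ⟨a, ha⟩).ne'
  have hq (i : ι) : (if i = a then (θ a + Δ') / (T + Δ') else θ i / (T + Δ')) =
      Function.update θ a (θ a + Δ') i / (T + Δ') := by
    rw [Function.update_apply, ite_div]
  simp_rw [hq, sum_div_sq_div_div, sum_sq_div_update ha]
  field_simp
  ring

/-- Chi-square-type identity for the perturbed Plackett–Luce winner distribution:
`∑ i ∈ S, p(i)²/q(i) - 1 = Δ'² (θ_S - θ_a) / (θ_S² (θ_a + Δ'))`, where
`p(i) = θ_i/θ_S`, `q(i) = θ_i/(θ_S + Δ')` for `i ≠ a`, and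
`q(a) = (θ_a + Δ')/(θ_S + Δ')`. -/
theorem stmt5 {ι : Type*} [DecidableEq ι] (S : Finset ι) (hS : S.Nonempty)
    (θ : ι → ℝ) (hθ : ∀ i ∈ S, 0 < θ i) (a : ι) (ha : a ∈ S)
    (Δ' : ℝ) (hΔ : 0 < θ a + Δ') :
    (∑ i ∈ S, (θ i / ∑ j ∈ S, θ j) ^ 2 /
        (if i = a then (θ a + Δ') / ((∑ j ∈ S, θ j) + Δ')
         else θ i / ((∑ j ∈ S, θ j) + Δ'))) - 1
      = Δ' ^ 2 * ((∑ j ∈ S, θ j) - θ a) / ((∑ j ∈ S, θ j) ^ 2 * (θ a + Δ')) :=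
  stmt5_general S θ hθ a ha Δ' hΔ
end

section
/- Let S be a finite nonempty set, let θ_i > 0 for each i ∈ S, let θ_S := Σ_{i∈S} θ_i, fix a ∈ S, and let Δ' be a real number with θ_a + Δ' > 0. Let p be the Plackett–Luce winner distribution on S for the parameters θ, and q the Plackett–Luce winner distribution on S for the perturbed parameters in which θ_a is replaced by θ_a + Δ' and all other parameters are unchanged. Then KL(p, q) ≤ Δ'² (θ_S − θ_a) / (θ_S² (θ_a + Δ')); in particular, KL(p, q) ≤ Δ'² / (θ_S (θ_a + Δ')). -/
/-!
Since `log x ≤ x - 1`, the divergence `KL(p, q)` is at most the χ²-divergence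
`∑ pᵢ (pᵢ / qᵢ - 1)`. Perturbing `θ_a` rescales every `qᵢ` with `i ≠ a` by the same factor,
so that χ²-divergence has the closed form `Δ'² (θ_S - θ_a) / (θ_S² (θ_a + Δ'))`.
-/

open Finset Real

theorem sum_mul_log_div_le_sum_mul_div_sub_one {ι : Type*} (s : Finset ι) (p q : ι → ℝ)
    (hp : ∀ i ∈ s, 0 ≤ p i) (hq : ∀ i ∈ s, 0 < q i) :
    ∑ i ∈ s, p i * log (p i / q i) ≤ ∑ i ∈ s, p i * (p i / q i - 1) := by
  refine sum_le_sum fun i hi => ?_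
  rcases (hp i hi).eq_or_lt with hpi | hpi
  · simp [← hpi]
  · exact mul_le_mul_of_nonneg_left (log_le_sub_one_of_pos (div_pos hpi (hq i hi))) hpi.le

theorem sum_plackettLuce_mul_div_perturb_sub_one {ι : Type*} [DecidableEq ι] (S : Finset ι)
    (θ : ι → ℝ) (hθ : ∀ i ∈ S, θ i ≠ 0) (a : ι) (ha : a ∈ S) (Δ' : ℝ)
    (hT : ∑ j ∈ S, θ j ≠ 0) (hΔ : θ a + Δ' ≠ 0) :
    ∑ i ∈ S, (θ i / ∑ j ∈ S, θ j) *
        ((θ i / ∑ j ∈ S, θ j) /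
          (if i = a then (θ a + Δ') / ((∑ j ∈ S, θ j) + Δ')
           else θ i / ((∑ j ∈ S, θ j) + Δ')) - 1)
      = Δ' ^ 2 * ((∑ j ∈ S, θ j) - θ a) / ((∑ j ∈ S, θ j) ^ 2 * (θ a + Δ')) := by
  set T := ∑ j ∈ S, θ j
  have h_ne_a : ∀ i ∈ S.erase a, (θ i / T) *
      ((θ i / T) / (if i = a then (θ a + Δ') / (T + Δ') else θ i / (T + Δ')) - 1)
        = θ i / T * (Δ' / T) := by
    intro i hi
    have := hθ i (mem_of_mem_erase hi)
    rw [if_neg (ne_of_mem_erase hi)]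
    field_simp
    ring
  rw [← sum_erase_add _ _ ha, sum_congr rfl h_ne_a, ← sum_mul, ← sum_div,
    sum_erase_eq_sub ha, if_pos rfl]
  field_simp
  ring

theorem stmt6_general {ι : Type*} [DecidableEq ι] (S : Finset ι)
    (θ : ι → ℝ) (hθ : ∀ i ∈ S, 0 < θ i) (a : ι) (ha : a ∈ S)
    (Δ' : ℝ) (hΔ : 0 < θ a + Δ') :
    (∑ i ∈ S, (θ i / ∑ j ∈ S, θ j) *
        Real.log ((θ i / ∑ j ∈ S, θ j) /
          (if i = a then (θ a + Δ') / ((∑ j ∈ S, θ j) + Δ')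
           else θ i / ((∑ j ∈ S, θ j) + Δ'))))
      ≤ Δ' ^ 2 * ((∑ j ∈ S, θ j) - θ a) / ((∑ j ∈ S, θ j) ^ 2 * (θ a + Δ')) ∧
    (∑ i ∈ S, (θ i / ∑ j ∈ S, θ j) *
        Real.log ((θ i / ∑ j ∈ S, θ j) /
          (if i = a then (θ a + Δ') / ((∑ j ∈ S, θ j) + Δ')
           else θ i / ((∑ j ∈ S, θ j) + Δ'))))
      ≤ Δ' ^ 2 / ((∑ j ∈ S, θ j) * (θ a + Δ')) := by
  set T := ∑ j ∈ S, θ j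
  have hθa : 0 < θ a := hθ a ha
  have hθa_le : θ a ≤ T := single_le_sum (fun i hi => (hθ i hi).le) ha
  have hT : 0 < T := hθa.trans_le hθa_le
  have hTΔ : 0 < T + Δ' := by linarith
  have hKL : _ ≤ Δ' ^ 2 * (T - θ a) / (T ^ 2 * (θ a + Δ')) :=
    (sum_mul_log_div_le_sum_mul_div_sub_one S (fun i => θ i / T)
      (fun i => if i = a then (θ a + Δ') / (T + Δ') else θ i / (T + Δ'))
      (fun i hi => (div_pos (hθ i hi) hT).le)
      (fun i hi => by have := hθ i hi; split_ifs <;> positivity)).trans_eq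
    (sum_plackettLuce_mul_div_perturb_sub_one S θ (fun i hi => (hθ i hi).ne') a ha Δ'
      hT.ne' hΔ.ne')
  refine ⟨hKL, hKL.trans ?_⟩
  calc Δ' ^ 2 * (T - θ a) / (T ^ 2 * (θ a + Δ'))
      = Δ' ^ 2 / (T * (θ a + Δ')) * ((T - θ a) / T) := by field_simp
    _ ≤ Δ' ^ 2 / (T * (θ a + Δ')) :=
      mul_le_of_le_one_right (by positivity) ((div_le_one hT).2 (by linarith))

/-- KL-divergence bound between a Plackett–Luce winner distribution and its
perturbation in a single coordinate `a`:
`KL(p,q) ≤ Δ'² (θ_S - θ_a)/(θ_S² (θ_a + Δ'))` and in particular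
`KL(p,q) ≤ Δ'²/(θ_S (θ_a + Δ'))`. -/
theorem stmt6 {ι : Type*} [DecidableEq ι] (S : Finset ι) (hS : S.Nonempty)
    (θ : ι → ℝ) (hθ : ∀ i ∈ S, 0 < θ i) (a : ι) (ha : a ∈ S)
    (Δ' : ℝ) (hΔ : 0 < θ a + Δ') :
    (∑ i ∈ S, (θ i / ∑ j ∈ S, θ j) *
        Real.log ((θ i / ∑ j ∈ S, θ j) /
          (if i = a then (θ a + Δ') / ((∑ j ∈ S, θ j) + Δ')
           else θ i / ((∑ j ∈ S, θ j) + Δ'))))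
      ≤ Δ' ^ 2 * ((∑ j ∈ S, θ j) - θ a) / ((∑ j ∈ S, θ j) ^ 2 * (θ a + Δ')) ∧
    (∑ i ∈ S, (θ i / ∑ j ∈ S, θ j) *
        Real.log ((θ i / ∑ j ∈ S, θ j) /
          (if i = a then (θ a + Δ') / ((∑ j ∈ S, θ j) + Δ')
           else θ i / ((∑ j ∈ S, θ j) + Δ'))))
      ≤ Δ' ^ 2 / ((∑ j ∈ S, θ j) * (θ a + Δ')) :=
  stmt6_general S θ hθ a ha Δ' hΔ
end

section
/- Let n ≥ 2, let θ : {1,…,n} → (0,∞), and let u and a be two distinct items with θ_u > θ_a; set Δ := θ_u − θ_a. Let θ' be obtained from θ by swapping the values at u and a (θ'_u = θ_a, θ'_a = θ_u, and θ'_i = θ_i for i ∉ {u,a}). For any finite nonempty S ⊆ {1,…,n}, let p and q be the Plackett–Luce winner distributions on S under θ and θ' respectively, and let θ_S := Σ_{i∈S} θ_i. Then KL(p, q) ≤ (Δ²/θ_S) · (θ_u·1[u ∈ S] + θ_a·1[a ∈ S]) / (θ_u θ_a). -/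
/-!
Bound the KL divergence by the χ² divergence `∑ p²/q - 1` (from `log x ≤ x - 1`). Since `θ'`
differs from `θ` only at `u` and `a`, both `∑_S θ'` and `∑_S θ²/θ'` differ from `θ_S` only by
the contributions of those of `u`, `a` that lie in `S`, and the χ² divergence is explicit.
-/

open Finset Real

theorem sum_mul_log_div_le_sum_sq_div_sub_sum {ι : Type*} (s : Finset ι) (p q : ι → ℝ)
    (hp : ∀ i ∈ s, 0 ≤ p i) (hq : ∀ i ∈ s, 0 < q i) :
    ∑ i ∈ s, p i * log (p i / q i) ≤ ∑ i ∈ s, p i ^ 2 / q i - ∑ i ∈ s, p i := by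
  rw [← sum_sub_distrib]
  refine sum_le_sum fun i hi => ?_
  rcases (hp i hi).eq_or_lt with hpi | hpi
  · simp [← hpi]
  calc p i * log (p i / q i) ≤ p i * (p i / q i - 1) :=
        mul_le_mul_of_nonneg_left (log_le_sub_one_of_pos (div_pos hpi (hq i hi))) hpi.le
    _ = p i ^ 2 / q i - p i := by ring

theorem sum_sub_sum_of_eq_of_ne_of_ne {ι β : Type*} [DecidableEq ι] [AddCommGroup β]
    (s : Finset ι) {f g : ι → β} {u a : ι} (hua : u ≠ a)
    (hfg : ∀ i ∈ s, i ≠ u → i ≠ a → f i = g i) :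
    ∑ i ∈ s, f i - ∑ i ∈ s, g i =
      (if u ∈ s then f u - g u else 0) + (if a ∈ s then f a - g a else 0) := by
  rw [← sum_ite_eq' s u (fun i => f i - g i), ← sum_ite_eq' s a (fun i => f i - g i),
    ← sum_sub_distrib, ← sum_add_distrib]
  refine sum_congr rfl fun i hi => ?_
  by_cases hu : i = u
  · subst hu; simp [hua]
  by_cases ha : i = a
  · subst ha; simp [hu]
  · simp [hu, ha, hfg i hi hu ha]

theorem sum_div_sum_mul_log_le {ι : Type*} {s : Finset ι} (hs : s.Nonempty) {w w' : ι → ℝ}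
    (hw : ∀ i ∈ s, 0 < w i) (hw' : ∀ i ∈ s, 0 < w' i) :
    ∑ i ∈ s, (w i / ∑ j ∈ s, w j) * log ((w i / ∑ j ∈ s, w j) / (w' i / ∑ j ∈ s, w' j))
      ≤ (∑ j ∈ s, w' j) * (∑ i ∈ s, w i ^ 2 / w' i) / (∑ j ∈ s, w j) ^ 2 - 1 := by
  set W := ∑ j ∈ s, w j
  set W' := ∑ j ∈ s, w' j
  have hW : 0 < W := sum_pos hw hs
  have hW' : 0 < W' := sum_pos hw' hs
  refine (sum_mul_log_div_le_sum_sq_div_sub_sum s _ _ (fun i hi => (div_pos (hw i hi) hW).le)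
    fun i hi => div_pos (hw' i hi) hW').trans_eq ?_
  rw [← sum_div, div_self hW.ne', mul_sum, sum_div]
  congr 1
  refine sum_congr rfl fun i hi => ?_
  field_simp [(hw' i hi).ne']

theorem stmt7_general (n : ℕ) (θ : ℕ → ℝ)
    (hθ : ∀ i ∈ Finset.Icc 1 n, 0 < θ i)
    (u a : ℕ) (hu : u ∈ Finset.Icc 1 n) (ha : a ∈ Finset.Icc 1 n)
    (hua : u ≠ a)
    (θ' : ℕ → ℝ)
    (hθ' : θ' = fun i => if i = u then θ a else if i = a then θ u else θ i)
    (S : Finset ℕ) (hSsub : S ⊆ Finset.Icc 1 n) (hS : S.Nonempty) :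
    (∑ i ∈ S, (θ i / ∑ j ∈ S, θ j) *
        Real.log ((θ i / ∑ j ∈ S, θ j) / (θ' i / ∑ j ∈ S, θ' j)))
      ≤ ((θ u - θ a) ^ 2 / ∑ j ∈ S, θ j) *
          ((θ u * (if u ∈ S then 1 else 0) + θ a * (if a ∈ S then 1 else 0)) /
            (θ u * θ a)) := by
  have hθu := hθ u hu
  have hθa := hθ a ha
  have hθ'u : θ' u = θ a := by simp [hθ']
  have hθ'a : θ' a = θ u := by simp [hθ', hua.symm]
  have hθ'_of_ne : ∀ i, i ≠ u → i ≠ a → θ' i = θ i := by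
    intro i hiu hia; simp [hθ', hiu, hia]
  have hpos : ∀ i ∈ S, 0 < θ i := fun i hi => hθ i (hSsub hi)
  have hpos' : ∀ i ∈ S, 0 < θ' i := by
    intro i hi
    simp only [hθ']
    split_ifs
    exacts [hθa, hθu, hpos i hi]
  refine (sum_div_sum_mul_log_le hS hpos hpos').trans ?_
  set T := ∑ j ∈ S, θ j
  set T' := ∑ j ∈ S, θ' j
  have hT : 0 < T := sum_pos hpos hS
  have hT'_sub : T' - T = (if u ∈ S then θ a - θ u else 0) + (if a ∈ S then θ u - θ a else 0) := by
    rw [sum_sub_sum_of_eq_of_ne_of_ne S hua fun i _ => hθ'_of_ne i, hθ'u, hθ'a]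
  have hχ : ∑ i ∈ S, θ i ^ 2 / θ' i - T =
      (if u ∈ S then θ u ^ 2 / θ a - θ u else 0) + (if a ∈ S then θ a ^ 2 / θ u - θ a else 0) := by
    rw [sum_sub_sum_of_eq_of_ne_of_ne S hua (g := θ) ?_, hθ'u, hθ'a]
    intro i hi hiu hia
    rw [hθ'_of_ne i hiu hia]
    field_simp [(hpos i hi).ne']
  rw [eq_add_of_sub_eq' hT'_sub, eq_add_of_sub_eq' hχ]
  -- The χ² divergence equals the bound if both or neither of `u`, `a` lie in `S`; otherwise it
  -- falls short by `Δ² θ_u / (θ_a θ_S²)`, resp. `Δ² θ_a / (θ_u θ_S²)`.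
  split_ifs <;> field_simp <;> nlinarith

/-- Change-of-measure estimate for the swapped Plackett–Luce instance (winner feedback):
if `θ'` is obtained from `θ` by swapping the values at `u` and `a` (with `θ_u > θ_a`,
`Δ = θ_u - θ_a`), then for any nonempty `S ⊆ {1,…,n}`, the KL divergence between the
winner distributions on `S` under `θ` and `θ'` is at most
`(Δ²/θ_S) · (θ_u·1[u∈S] + θ_a·1[a∈S]) / (θ_u θ_a)`. -/
theorem stmt7 (n : ℕ) (hn : 2 ≤ n) (θ : ℕ → ℝ)
    (hθ : ∀ i ∈ Finset.Icc 1 n, 0 < θ i)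
    (u a : ℕ) (hu : u ∈ Finset.Icc 1 n) (ha : a ∈ Finset.Icc 1 n)
    (hua : u ≠ a) (hgap : θ a < θ u)
    (θ' : ℕ → ℝ)
    (hθ' : θ' = fun i => if i = u then θ a else if i = a then θ u else θ i)
    (S : Finset ℕ) (hSsub : S ⊆ Finset.Icc 1 n) (hS : S.Nonempty) :
    (∑ i ∈ S, (θ i / ∑ j ∈ S, θ j) *
        Real.log ((θ i / ∑ j ∈ S, θ j) / (θ' i / ∑ j ∈ S, θ' j)))
      ≤ ((θ u - θ a) ^ 2 / ∑ j ∈ S, θ j) *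
          ((θ u * (if u ∈ S then 1 else 0) + θ a * (if a ∈ S then 1 else 0)) /
            (θ u * θ a)) :=
  stmt7_general n θ hθ u a hu ha hua θ' hθ' S hSsub hS
end

section
/- Fix integers n ≥ 2 and 2 ≤ k ≤ n, parameters θ : {1,…,n} → (0,1] with θ_1 > θ_a for all a ∈ {2,…,n}, and ε > 0; set Δ'_a := θ_1 − θ_a + ε for a ∈ {2,…,n}, and for a subset S set θ_S := Σ_{i∈S} θ_i. Let L ≥ 0 and let N assign a nonnegative real N_S to every subset S ⊆ {1,…,n} of size k. If for every a ∈ {2,…,n} one has Σ_{S : |S|=k, a∈S} N_S · Δ'_a² / (θ_S (θ_1 + ε)) ≥ L, then Σ_{S : |S|=k} N_S ≥ L · Σ_{a=2}^{n} θ_a (θ_1 + ε) / Δ'_a². -/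
/-! The constraints form the primal of a covering LP in the variables `N_S`. The weights
`y_a = θ_a (θ_1 + ε) / Δ'_a²` are a feasible dual solution: for each `S` the dual constraint
reads `∑_{a ∈ S, a ≥ 2} θ_a / θ_S ≤ 1`, which holds since all `θ_i ≥ 0`. Weak duality then
bounds `∑_S N_S` below by `L ∑_a y_a`. -/

open Finset

theorem Finset.mul_sum_le_sum_of_dual_feasible {ι κ : Type*} (s : Finset ι) (t : Finset κ)
    (c : ι → κ → ℝ) (y : ι → ℝ) (N : κ → ℝ) (L : ℝ)
    (hy : ∀ a ∈ s, 0 ≤ y a) (hN : ∀ S ∈ t, 0 ≤ N S)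
    (hprimal : ∀ a ∈ s, L ≤ ∑ S ∈ t, N S * c a S)
    (hdual : ∀ S ∈ t, ∑ a ∈ s, y a * c a S ≤ 1) :
    L * ∑ a ∈ s, y a ≤ ∑ S ∈ t, N S :=
  calc L * ∑ a ∈ s, y a = ∑ a ∈ s, y a * L := by rw [mul_sum]; simp only [mul_comm]
    _ ≤ ∑ a ∈ s, y a * ∑ S ∈ t, N S * c a S :=
        sum_le_sum fun a ha => mul_le_mul_of_nonneg_left (hprimal a ha) (hy a ha)
    _ = ∑ S ∈ t, N S * ∑ a ∈ s, y a * c a S := by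
        simp only [mul_sum]; rw [sum_comm]; simp only [mul_left_comm]
    _ ≤ ∑ S ∈ t, N S := sum_le_sum fun S hS =>
        mul_le_of_le_one_right (hN S hS) (hdual S hS)

theorem Finset.sum_filter_mem_div_sum_le_one {ι : Type*} [DecidableEq ι] (s S : Finset ι)
    (θ : ι → ℝ) (hθ : ∀ i ∈ S, 0 ≤ θ i) :
    ∑ a ∈ s with a ∈ S, θ a / ∑ i ∈ S, θ i ≤ 1 := by
  rw [← sum_div]
  refine div_le_one_of_le₀ ?_ (sum_nonneg hθ)
  exact sum_le_sum_of_subset_of_nonneg (fun a ha => (mem_filter.mp ha).2)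
    fun i hi _ => hθ i hi

theorem stmt8_general (n k : ℕ)
    (θ : ℕ → ℝ) (hθ : ∀ i ∈ Finset.Icc 1 n, 0 < θ i ∧ θ i ≤ 1)
    (hbest : ∀ a ∈ Finset.Icc 2 n, θ a < θ 1)
    (ε : ℝ) (hε : 0 < ε) (L : ℝ)
    (N : Finset ℕ → ℝ)
    (hN : ∀ S ∈ (Finset.Icc 1 n).powersetCard k, 0 ≤ N S)
    (hcon : ∀ a ∈ Finset.Icc 2 n,
      L ≤ ∑ S ∈ ((Finset.Icc 1 n).powersetCard k).filter (fun S => a ∈ S),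
            N S * (θ 1 - θ a + ε) ^ 2 / ((∑ i ∈ S, θ i) * (θ 1 + ε))) :
    L * ∑ a ∈ Finset.Icc 2 n, θ a * (θ 1 + ε) / (θ 1 - θ a + ε) ^ 2
      ≤ ∑ S ∈ (Finset.Icc 1 n).powersetCard k, N S := by
  have hpos : ∀ a ∈ Icc 2 n, 0 < θ a ∧ 0 < θ 1 + ε ∧ 0 < θ 1 - θ a + ε := fun a ha => by
    have hθa := (hθ a (Icc_subset_Icc_left (by omega) ha)).1
    have := hbest a ha
    exact ⟨hθa, by linarith, by linarith⟩
  refine mul_sum_le_sum_of_dual_feasible _ _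
    (fun a S => if a ∈ S then (θ 1 - θ a + ε) ^ 2 / ((∑ i ∈ S, θ i) * (θ 1 + ε)) else 0)
    _ _ _ (fun a ha => by obtain ⟨h₁, h₂, -⟩ := hpos a ha; positivity) hN
    (fun a ha => by simpa only [mul_ite, mul_zero, ← sum_filter, mul_div_assoc] using hcon a ha)
    fun S hS => ?_
  have hSθ : ∀ i ∈ S, 0 ≤ θ i := fun i hi =>
    (hθ i ((mem_powersetCard.mp hS).1 hi)).1.le
  refine le_of_eq_of_le ?_ (sum_filter_mem_div_sum_le_one (Icc 2 n) S θ hSθ)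
  rw [sum_filter]
  refine sum_congr rfl fun a ha => ?_
  obtain ⟨-, h₂, h₃⟩ := hpos a ha
  split_ifs
  · field_simp
  · rw [mul_zero]

/-- LP weak-duality step of the sample-complexity lower bound: if nonnegative play
counts `N_S` over the `k`-subsets of `{1,…,n}` satisfy, for each suboptimal item
`a ∈ {2,…,n}`, the constraint
`∑_{S ∋ a} N_S Δ'_a² / (θ_S (θ_1 + ε)) ≥ L` (with `Δ'_a = θ_1 - θ_a + ε`), then
`∑_S N_S ≥ L ∑_{a=2}^n θ_a (θ_1 + ε)/Δ'_a²`. -/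
theorem stmt8 (n k : ℕ) (hn : 2 ≤ n) (hk2 : 2 ≤ k) (hkn : k ≤ n)
    (θ : ℕ → ℝ) (hθ : ∀ i ∈ Finset.Icc 1 n, 0 < θ i ∧ θ i ≤ 1)
    (hbest : ∀ a ∈ Finset.Icc 2 n, θ a < θ 1)
    (ε : ℝ) (hε : 0 < ε) (L : ℝ) (hL : 0 ≤ L)
    (N : Finset ℕ → ℝ)
    (hN : ∀ S ∈ (Finset.Icc 1 n).powersetCard k, 0 ≤ N S)
    (hcon : ∀ a ∈ Finset.Icc 2 n,
      L ≤ ∑ S ∈ ((Finset.Icc 1 n).powersetCard k).filter (fun S => a ∈ S),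
            N S * (θ 1 - θ a + ε) ^ 2 / ((∑ i ∈ S, θ i) * (θ 1 + ε))) :
    L * ∑ a ∈ Finset.Icc 2 n, θ a * (θ 1 + ε) / (θ 1 - θ a + ε) ^ 2
      ≤ ∑ S ∈ (Finset.Icc 1 n).powersetCard k, N S :=
  stmt8_general n k θ hθ hbest ε hε L N hN hcon
end

section
/- Fix integers n ≥ 2 and 2 ≤ k ≤ n, parameters θ : {1,…,n} → (0,1] with θ_1 > θ_a for all a ∈ {2,…,n}, and ε > 0. For each a ∈ {2,…,n}, let θ^a be the perturbed parameter vector with θ^a_a = θ_1 + ε and θ^a_i = θ_i for i ≠ a; for each subset S ⊆ {1,…,n} of size k, let p_S and p^a_S denote the Plackett–Luce winner distributions on S under θ and θ^a respectively. Let L ≥ 0 and let N assign a nonnegative real N_S to every subset S of size k. If for every a ∈ {2,…,n} one has Σ_{S : |S|=k, a∈S} N_S · KL(p_S, p^a_S) ≥ L, then Σ_{S : |S|=k} N_S ≥ L · Σ_{a=2}^{n} θ_a (θ_1 + ε) / (θ_1 − θ_a + ε)². -/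
/-!
Boosting `θ_a` to `c = θ_1 + ε` changes the Plackett–Luce winner distribution on `S ∋ a` only
through the weight of `a` and the normaliser, so two applications of `log x ≤ x - 1` give
`KL(p_S, p^a_S) ≤ p_S(a) · (c - θ_a)² / (θ_a c)`. The constraints then say that
`L / c_a ≤ ∑_{S ∋ a} N_S p_S(a)` with `c_a = (c - θ_a)² / (θ_a c)`; summing over `a` and using
`∑_{a ∈ S} p_S(a) ≤ 1` gives the bound, which is weak LP duality for the program
`min ∑_S N_S` subject to the constraints.
-/

open Finset Real

section PlackettLuce

variable {ι : Type*}

noncomputable def plWinner (θ : ι → ℝ) (S : Finset ι) (i : ι) : ℝ :=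
  θ i / ∑ j ∈ S, θ j

noncomputable def plWinnerKL (θ θ' : ι → ℝ) (S : Finset ι) : ℝ :=
  ∑ i ∈ S, plWinner θ S i * log (plWinner θ S i / plWinner θ' S i)

theorem sum_plWinner_le_one {θ : ι → ℝ} {S A : Finset ι} (hAS : A ⊆ S)
    (hθ : ∀ i ∈ S, 0 ≤ θ i) : ∑ i ∈ A, plWinner θ S i ≤ 1 := by
  simp only [plWinner, ← sum_div]
  exact div_le_one_of_le₀ (sum_le_sum_of_subset_of_nonneg hAS fun i hi _ => hθ i hi)
    (sum_nonneg hθ)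

theorem sum_plWinner_eq_one {θ : ι → ℝ} {S : Finset ι} (hS : ∑ j ∈ S, θ j ≠ 0) :
    ∑ i ∈ S, plWinner θ S i = 1 := by
  simp only [plWinner, ← sum_div, div_self hS]

variable [DecidableEq ι] {θ : ι → ℝ} {S : Finset ι} {a : ι} {c : ℝ}

theorem plWinnerKL_update_eq (haS : a ∈ S) (hθ : ∀ i ∈ S, 0 < θ i) (hc : 0 < c) :
    plWinnerKL θ (Function.update θ a c) S =
      plWinner θ S a * log (θ a / c) + log ((∑ j ∈ S, θ j + (c - θ a)) / ∑ j ∈ S, θ j) := by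
  set T := ∑ j ∈ S, θ j with hT_def
  have hT : 0 < T := sum_pos hθ ⟨a, haS⟩
  have hT' : ∑ j ∈ S, Function.update θ a c j = T + (c - θ a) := by
    rw [sum_update_of_mem haS, sdiff_singleton_eq_erase, hT_def, ← add_sum_erase S θ haS]
    ring
  have hupd : ∀ i ∈ S, 0 < Function.update θ a c i := by
    intro i hi
    rcases eq_or_ne i a with rfl | hia
    · simpa using hc
    · simpa [hia] using hθ i hi
  -- Each log-ratio splits as `log (θ i / θ' i) + log (T' / T)`; the first part vanishes off `a`.
  have hsplit : ∀ i ∈ S,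
      plWinner θ S i * log (plWinner θ S i / plWinner (Function.update θ a c) S i) =
        plWinner θ S i * log (θ i / Function.update θ a c i)
        + plWinner θ S i * log ((T + (c - θ a)) / T) := by
    intro i hi
    have hT'pos : 0 < T + (c - θ a) := hT' ▸ sum_pos hupd ⟨a, haS⟩
    rw [plWinner, plWinner, hT', div_div_div_eq, ← mul_add,
      ← log_mul (div_pos (hθ i hi) (hupd i hi)).ne' (div_pos hT'pos hT).ne']
    congr 2
    rw [← hT_def]
    field_simp
  have hoff : ∀ i ∈ S, i ≠ a → plWinner θ S i * log (θ i / Function.update θ a c i) = 0 := by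
    intro i hi hia
    rw [Function.update_of_ne hia, div_self (hθ i hi).ne', log_one, mul_zero]
  rw [plWinnerKL, sum_congr rfl hsplit, sum_add_distrib, sum_eq_single_of_mem a haS hoff,
    Function.update_self, ← sum_mul, sum_plWinner_eq_one hT.ne', one_mul]

theorem plWinnerKL_update_le (haS : a ∈ S) (hθ : ∀ i ∈ S, 0 < θ i) (hc : θ a < c) :
    plWinnerKL θ (Function.update θ a c) S ≤ (c - θ a) ^ 2 / (θ a * c) * plWinner θ S a := by
  have ha : 0 < θ a := hθ a haS
  have hc0 : 0 < c := ha.trans hc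
  have hT : 0 < ∑ j ∈ S, θ j := sum_pos hθ ⟨a, haS⟩
  rw [plWinnerKL_update_eq haS hθ hc0]
  have hlog_a := log_le_sub_one_of_pos (div_pos ha hc0)
  have hlog_T := log_le_sub_one_of_pos
    (show 0 < (∑ j ∈ S, θ j + (c - θ a)) / ∑ j ∈ S, θ j by
      apply div_pos _ hT; linarith)
  have hp : 0 ≤ plWinner θ S a := div_nonneg ha.le hT.le
  calc plWinner θ S a * log (θ a / c) + log ((∑ j ∈ S, θ j + (c - θ a)) / ∑ j ∈ S, θ j)
      ≤ plWinner θ S a * (θ a / c - 1) + ((∑ j ∈ S, θ j + (c - θ a)) / ∑ j ∈ S, θ j - 1) := by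
        gcongr
    _ = (c - θ a) ^ 2 / (θ a * c) * plWinner θ S a := by
        rw [plWinner]
        field_simp
        ring

end PlackettLuce

theorem mul_sum_inv_le_sum_of_le_mul_sum {α σ : Type*} {A : Finset α} {F : Finset σ}
    (mem : α → σ → Prop) [∀ a S, Decidable (mem a S)] {N : σ → ℝ} {w : α → σ → ℝ}
    {c : α → ℝ} {L : ℝ} (hc : ∀ a ∈ A, 0 < c a) (hN : ∀ S ∈ F, 0 ≤ N S)
    (hw : ∀ S ∈ F, ∑ a ∈ A with mem a S, w a S ≤ 1)
    (hL : ∀ a ∈ A, L ≤ c a * ∑ S ∈ F with mem a S, N S * w a S) :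
    L * ∑ a ∈ A, (c a)⁻¹ ≤ ∑ S ∈ F, N S := by
  calc L * ∑ a ∈ A, (c a)⁻¹
      ≤ ∑ a ∈ A, ∑ S ∈ F with mem a S, N S * w a S := by
        rw [mul_sum]
        refine sum_le_sum fun a ha => ?_
        rw [← div_eq_mul_inv, div_le_iff₀' (hc a ha)]
        exact hL a ha
    _ = ∑ S ∈ F, N S * ∑ a ∈ A with mem a S, w a S := by
        simp only [mul_sum]
        exact sum_comm' (by simp only [mem_filter]; tauto)
    _ ≤ ∑ S ∈ F, N S :=
        sum_le_sum fun S hS => mul_le_of_le_one_right (hN S hS) (hw S hS)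

theorem stmt9_general (n k : ℕ)
    (θ : ℕ → ℝ) (hθ : ∀ i ∈ Finset.Icc 1 n, 0 < θ i ∧ θ i ≤ 1)
    (hbest : ∀ a ∈ Finset.Icc 2 n, θ a < θ 1)
    (ε : ℝ) (hε : 0 < ε) (L : ℝ)
    (N : Finset ℕ → ℝ)
    (hN : ∀ S ∈ (Finset.Icc 1 n).powersetCard k, 0 ≤ N S)
    (hcon : ∀ a ∈ Finset.Icc 2 n,
      L ≤ ∑ S ∈ ((Finset.Icc 1 n).powersetCard k).filter (fun S => a ∈ S),
            N S *
              ∑ i ∈ S, (θ i / ∑ j ∈ S, θ j) *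
                Real.log ((θ i / ∑ j ∈ S, θ j) /
                  (Function.update θ a (θ 1 + ε) i /
                    ∑ j ∈ S, Function.update θ a (θ 1 + ε) j))) :
    L * ∑ a ∈ Finset.Icc 2 n, θ a * (θ 1 + ε) / (θ 1 - θ a + ε) ^ 2
      ≤ ∑ S ∈ (Finset.Icc 1 n).powersetCard k, N S := by
  have hpos : ∀ S ∈ (Icc 1 n).powersetCard k, ∀ i ∈ S, 0 < θ i := fun S hS i hi =>
    (hθ i ((mem_powersetCard.mp hS).1 hi)).1
  have hθa : ∀ a ∈ Icc 2 n, 0 < θ a := fun a ha =>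
    (hθ a (Icc_subset_Icc_left one_le_two ha)).1
  have hinv : ∀ a, θ a * (θ 1 + ε) / (θ 1 - θ a + ε) ^ 2
      = ((θ 1 - θ a + ε) ^ 2 / (θ a * (θ 1 + ε)))⁻¹ := fun a => (inv_div _ _).symm
  simp only [hinv]
  refine mul_sum_inv_le_sum_of_le_mul_sum (fun a S => a ∈ S) (w := fun a S => plWinner θ S a)
    (fun a ha => ?_) hN (fun S hS => ?_) (fun a ha => ?_)
  · have ha_pos := hθa a ha
    have hgap : 0 < θ 1 - θ a + ε := by linarith [hbest a ha]
    have hθ1 : 0 < θ 1 + ε := by linarith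
    positivity
  · exact sum_plWinner_le_one (fun a ha => (mem_filter.mp ha).2) fun i hi => (hpos S hS i hi).le
  · refine (hcon a ha).trans ?_
    rw [mul_sum]
    refine sum_le_sum fun S hS => ?_
    have hKL := plWinnerKL_update_le (mem_filter.mp hS).2 (hpos S (mem_filter.mp hS).1)
      (show θ a < θ 1 + ε by linarith [hbest a ha])
    rw [show θ 1 + ε - θ a = θ 1 - θ a + ε by ring] at hKL
    calc N S * plWinnerKL θ (Function.update θ a (θ 1 + ε)) S
        ≤ N S * ((θ 1 - θ a + ε) ^ 2 / (θ a * (θ 1 + ε)) * plWinner θ S a) :=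
          mul_le_mul_of_nonneg_left hKL (hN S (mem_filter.mp hS).1)
      _ = _ := by ring

/-- Core of the `(0,δ)`-PAC sample-complexity lower bound with winner feedback:
if nonnegative play counts `N_S` over the `k`-subsets of `{1,…,n}` satisfy, for each
suboptimal `a ∈ {2,…,n}`, the change-of-measure constraint
`∑_{S ∋ a} N_S · KL(p_S, p^a_S) ≥ L`, where `p_S` (resp. `p^a_S`) is the
Plackett–Luce winner distribution on `S` under `θ` (resp. `θ` with `θ_a` replaced by
`θ_1 + ε`), then `∑_S N_S ≥ L ∑_{a=2}^n θ_a (θ_1 + ε)/(θ_1 - θ_a + ε)²`. -/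
theorem stmt9 (n k : ℕ) (hn : 2 ≤ n) (hk2 : 2 ≤ k) (hkn : k ≤ n)
    (θ : ℕ → ℝ) (hθ : ∀ i ∈ Finset.Icc 1 n, 0 < θ i ∧ θ i ≤ 1)
    (hbest : ∀ a ∈ Finset.Icc 2 n, θ a < θ 1)
    (ε : ℝ) (hε : 0 < ε) (L : ℝ) (hL : 0 ≤ L)
    (N : Finset ℕ → ℝ)
    (hN : ∀ S ∈ (Finset.Icc 1 n).powersetCard k, 0 ≤ N S)
    (hcon : ∀ a ∈ Finset.Icc 2 n,
      L ≤ ∑ S ∈ ((Finset.Icc 1 n).powersetCard k).filter (fun S => a ∈ S),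
            N S *
              ∑ i ∈ S, (θ i / ∑ j ∈ S, θ j) *
                Real.log ((θ i / ∑ j ∈ S, θ j) /
                  (Function.update θ a (θ 1 + ε) i /
                    ∑ j ∈ S, Function.update θ a (θ 1 + ε) j))) :
    L * ∑ a ∈ Finset.Icc 2 n, θ a * (θ 1 + ε) / (θ 1 - θ a + ε) ^ 2
      ≤ ∑ S ∈ (Finset.Icc 1 n).powersetCard k, N S :=
  stmt9_general n k θ hθ hbest ε hε L N hN hcon
end
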